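/- The probit K-function K(x) = φ(x)²/(Φ(x)(1−Φ(x))) is integrable on ℝ: ∫_ℝ φ(x)²/(Φ(x)(1−Φ(x))) dx < ∞, where φ is the standard normal density and Φ the standard normal CDF. -/

import Mathlib

open Real MeasureTheory

/-- The standard normal density. -/
noncomputable def stdGaussianPDF (x : ℝ) : ℝ :=
  (Real.sqrt (2 * Real.pi))⁻¹ * Real.exp (-x ^ 2 / 2)

/-- The standard normal cumulative distribution function. -/
noncomputable def stdGaussianCDF (x : ℝ) : ℝ :=
  ∫ t in Set.Iic x, stdGaussianPDF t

lemma sqrt2pi_pos : 0 < Real.sqrt (2 * Real.pi) :=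
  Real.sqrt_pos.2 (by positivity)

lemma stdPDF_pos (x : ℝ) : 0 < stdGaussianPDF x := by
  unfold stdGaussianPDF
  positivity

lemma stdPDF_anti {x y : ℝ} (h : x ^ 2 ≤ y ^ 2) :
    stdGaussianPDF y ≤ stdGaussianPDF x := by
  unfold stdGaussianPDF
  apply mul_le_mul_of_nonneg_left _ (inv_pos.2 sqrt2pi_pos).le
  exact Real.exp_le_exp.2 (by linarith)

lemma stdPDF_congr {x y : ℝ} (h : x ^ 2 = y ^ 2) :
    stdGaussianPDF x = stdGaussianPDF y :=
  le_antisymm (stdPDF_anti h.ge) (stdPDF_anti h.le)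

lemma stdPDF_integrable : Integrable stdGaussianPDF := by
  have h : Integrable (fun x : ℝ => Real.exp (-(1/2 : ℝ) * x ^ 2)) :=
    integrable_exp_neg_mul_sq (by norm_num)
  have := h.const_mul (Real.sqrt (2 * Real.pi))⁻¹
  refine this.congr (Filter.Eventually.of_forall fun x => ?_)
  unfold stdGaussianPDF
  ring_nf

lemma stdPDF_integral : ∫ x, stdGaussianPDF x = 1 := by
  unfold stdGaussianPDF
  rw [MeasureTheory.integral_const_mul]
  have : ∀ x : ℝ, Real.exp (-x ^ 2 / 2) = Real.exp (-(1/2 : ℝ) * x ^ 2) := by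
    intro x; ring_nf
  simp_rw [this, integral_gaussian]
  rw [inv_mul_eq_one₀ sqrt2pi_pos.ne']
  congr 1
  ring

lemma stdCDF_mono : Monotone stdGaussianCDF := by
  intro a b hab
  unfold stdGaussianCDF
  apply setIntegral_mono_set stdPDF_integrable.integrableOn
  · exact Filter.Eventually.of_forall fun x => (stdPDF_pos x).le
  · exact Filter.Eventually.of_forall fun x hx => le_trans hx hab

lemma box_min (a : ℝ) :
    min (stdGaussianPDF a) (stdGaussianPDF (a + 1))
      ≤ ∫ t in Set.Ioc a (a + 1), stdGaussianPDF t := by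
  set m := min (stdGaussianPDF a) (stdGaussianPDF (a + 1)) with hm
  have h1 : ∫ _t in Set.Ioc a (a + 1), m = m := by
    rw [setIntegral_const]
    simp [Real.volume_Ioc]
  rw [← h1]
  apply setIntegral_mono_on
  · exact integrableOn_const measure_Ioc_lt_top.ne
  · exact stdPDF_integrable.integrableOn
  · exact measurableSet_Ioc
  · intro t ht
    rcases le_total 0 t with h0 | h0
    · refine le_trans (min_le_right _ _) (stdPDF_anti ?_)
      nlinarith [ht.1, ht.2]
    · refine le_trans (min_le_left _ _) (stdPDF_anti ?_)
      nlinarith [ht.1, ht.2]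

lemma cdf_ge_box (a : ℝ) :
    (∫ t in Set.Ioc a (a + 1), stdGaussianPDF t) ≤ stdGaussianCDF (a + 1) := by
  unfold stdGaussianCDF
  apply setIntegral_mono_set stdPDF_integrable.integrableOn
  · exact Filter.Eventually.of_forall fun x => (stdPDF_pos x).le
  · exact Filter.Eventually.of_forall fun x hx => hx.2

lemma one_sub_cdf (x : ℝ) :
    1 - stdGaussianCDF x = ∫ t in Set.Ioi x, stdGaussianPDF t := by
  have := intervalIntegral.integral_Iic_add_Ioi (b := x) (μ := volume)
    stdPDF_integrable.integrableOn stdPDF_integrable.integrableOn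
  rw [stdPDF_integral] at this
  unfold stdGaussianCDF
  linarith

lemma one_sub_cdf_ge_box (a : ℝ) :
    (∫ t in Set.Ioc a (a + 1), stdGaussianPDF t) ≤ 1 - stdGaussianCDF a := by
  rw [one_sub_cdf]
  apply setIntegral_mono_set stdPDF_integrable.integrableOn
  · exact Filter.Eventually.of_forall fun x => (stdPDF_pos x).le
  · exact Filter.Eventually.of_forall fun x hx => hx.1

lemma min_pos (a : ℝ) :
    0 < min (stdGaussianPDF a) (stdGaussianPDF (a + 1)) :=
  lt_min (stdPDF_pos _) (stdPDF_pos _)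

lemma cdf_pos (x : ℝ) : 0 < stdGaussianCDF x := by
  have h := le_trans (box_min (x - 1)) (cdf_ge_box (x - 1))
  have hp := min_pos (x - 1)
  have hx : x - 1 + 1 = x := by ring
  rw [hx] at h hp
  exact lt_of_lt_of_le hp h

lemma cdf_lt_one (x : ℝ) : stdGaussianCDF x < 1 := by
  have h := le_trans (box_min x) (one_sub_cdf_ge_box x)
  linarith [min_pos x]

/-- key denominator lower bound -/
lemma denom_lower (x : ℝ) :
    stdGaussianPDF 1 * stdGaussianPDF (|x| + 1)
      ≤ stdGaussianCDF x * (1 - stdGaussianCDF x) := by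
  rcases le_total 0 x with hx | hx
  · have h1 : stdGaussianPDF 1 ≤ stdGaussianCDF x := by
      have h := le_trans (box_min (-1)) (cdf_ge_box (-1))
      have hmin : min (stdGaussianPDF (-1)) (stdGaussianPDF (-1 + 1)) = stdGaussianPDF 1 := by
        rw [min_eq_left (stdPDF_anti (by norm_num))]
        exact stdPDF_congr (by norm_num)
      rw [hmin] at h
      norm_num at h
      exact le_trans h (stdCDF_mono hx)
    have h2 : stdGaussianPDF (|x| + 1) ≤ 1 - stdGaussianCDF x := by
      have h := le_trans (box_min x) (one_sub_cdf_ge_box x)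
      have hmin : min (stdGaussianPDF x) (stdGaussianPDF (x + 1)) = stdGaussianPDF (x + 1) :=
        min_eq_right (stdPDF_anti (by nlinarith))
      rw [hmin] at h
      rw [abs_of_nonneg hx]
      exact h
    have := mul_le_mul h1 h2 (stdPDF_pos _).le (cdf_pos x).le
    linarith
  · have h1 : stdGaussianPDF (|x| + 1) ≤ stdGaussianCDF x := by
      have h := le_trans (box_min (x - 1)) (cdf_ge_box (x - 1))
      have hx1 : x - 1 + 1 = x := by ring
      rw [hx1] at h
      have hmin : min (stdGaussianPDF (x - 1)) (stdGaussianPDF x) = stdGaussianPDF (x - 1) :=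
        min_eq_left (stdPDF_anti (by nlinarith))
      rw [hmin] at h
      have heq : stdGaussianPDF (|x| + 1) = stdGaussianPDF (x - 1) := by
        apply stdPDF_congr
        rw [abs_of_nonpos hx]; ring
      rw [heq]
      exact h
    have h2 : stdGaussianPDF 1 ≤ 1 - stdGaussianCDF x := by
      have h := le_trans (box_min 0) (one_sub_cdf_ge_box 0)
      have hmin : min (stdGaussianPDF 0) (stdGaussianPDF (0 + 1)) = stdGaussianPDF (0 + 1) :=
        min_eq_right (stdPDF_anti (by norm_num))
      rw [hmin] at h
      norm_num at h
      have hmono := stdCDF_mono hx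
      linarith
    have := mul_le_mul h1 h2 (stdPDF_pos _).le (cdf_pos x).le
    linarith

lemma ratio_eq (x : ℝ) :
    stdGaussianPDF x ^ 2 / (stdGaussianPDF 1 * stdGaussianPDF (|x| + 1))
      = Real.exp (-x ^ 2 / 2 + |x| + 1) := by
  unfold stdGaussianPDF
  have hc : ((Real.sqrt (2 * Real.pi))⁻¹) ≠ 0 := (inv_pos.2 sqrt2pi_pos).ne'
  rw [mul_pow,
    show (Real.sqrt (2 * Real.pi))⁻¹ * Real.exp (-1 ^ 2 / 2) *
        ((Real.sqrt (2 * Real.pi))⁻¹ * Real.exp (-(|x| + 1) ^ 2 / 2)) =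
      ((Real.sqrt (2 * Real.pi))⁻¹) ^ 2 *
        (Real.exp (-1 ^ 2 / 2) * Real.exp (-(|x| + 1) ^ 2 / 2)) from by ring,
    mul_div_mul_left _ _ (pow_ne_zero 2 hc)]
  rw [sq, ← Real.exp_add, ← Real.exp_add, ← Real.exp_sub]
  congr 1
  rw [← sq_abs x]
  ring

/-- The probit K-function `K(x) = φ(x)²/(Φ(x)(1−Φ(x)))` is Lebesgue integrable
on `ℝ`. -/
theorem probit_K_integrable :
    Integrable (fun x => stdGaussianPDF x ^ 2
      / (stdGaussianCDF x * (1 - stdGaussianCDF x))) := by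
  have hmeas : AEStronglyMeasurable (fun x => stdGaussianPDF x ^ 2
      / (stdGaussianCDF x * (1 - stdGaussianCDF x))) volume := by
    apply Measurable.aestronglyMeasurable
    have hpdf : Measurable stdGaussianPDF := by
      unfold stdGaussianPDF; fun_prop
    have hcdf : Measurable stdGaussianCDF := stdCDF_mono.measurable
    exact (hpdf.pow_const 2).div ((hcdf.mul ((measurable_const.sub hcdf))))
  have hbig : Integrable (fun x : ℝ => Real.exp 2 * Real.exp (-(1/4 : ℝ) * x ^ 2)) :=
    (integrable_exp_neg_mul_sq (by norm_num)).const_mul _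
  refine hbig.mono' hmeas (Filter.Eventually.of_forall fun x => ?_)
  have hK : 0 ≤ stdGaussianPDF x ^ 2 / (stdGaussianCDF x * (1 - stdGaussianCDF x)) := by
    apply div_nonneg (sq_nonneg _)
    exact (mul_pos (cdf_pos x) (by linarith [cdf_lt_one x])).le
  rw [Real.norm_of_nonneg hK]
  have hd : 0 < stdGaussianPDF 1 * stdGaussianPDF (|x| + 1) :=
    mul_pos (stdPDF_pos _) (stdPDF_pos _)
  calc stdGaussianPDF x ^ 2 / (stdGaussianCDF x * (1 - stdGaussianCDF x))
      ≤ stdGaussianPDF x ^ 2 / (stdGaussianPDF 1 * stdGaussianPDF (|x| + 1)) :=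
        div_le_div_of_nonneg_left (sq_nonneg _) hd (denom_lower x)
    _ = Real.exp (-x ^ 2 / 2 + |x| + 1) := ratio_eq x
    _ ≤ Real.exp 2 * Real.exp (-(1/4 : ℝ) * x ^ 2) := by
        rw [← Real.exp_add]
        apply Real.exp_le_exp.2
        nlinarith [abs_nonneg x, sq_abs x, sq_nonneg (|x| - 2)]
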